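/- arXiv:1901.01302 — 6 statements merged into one kernel-verified Lean document; each statement's English description precedes it below -/
import Mathlib

section
/- For every integer N ≥ 1, every α ∈ (0,1), and every Z : Fin N → ℝ, the infimum defining AV@R_α(Z) is attained at ū := Z_(κ), where κ = ⌈(1-α)N⌉; that is, AV@R_α(Z) = Z_(κ) + (1/(αN)) Σ_{i=1}^N max(Z_i - Z_(κ), 0), and for every u ∈ ℝ one has u + (1/(αN)) Σ_{i=1}^N max(Z_i - u, 0) ≥ Z_(κ) + (1/(αN)) Σ_{i=1}^N max(Z_i - Z_(κ), 0). -/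
/-- Average Value at Risk: `AV@R_α(Z) = inf_u ( u + 1/(αN) Σᵢ max(Zᵢ - u, 0) )`. -/
noncomputable def avar (N : ℕ) (α : ℝ) (Z : Fin N → ℝ) : ℝ :=
  ⨅ u : ℝ, (u + 1 / (α * N) * ∑ i, max (Z i - u) 0)

/-- The risk measure `ρ_{λ,α}(Z) = (1-λ)·(1/N)ΣᵢZᵢ + λ·AV@R_α(Z)`. -/
noncomputable def rho (N : ℕ) (α lam : ℝ) (Z : Fin N → ℝ) : ℝ :=
  (1 - lam) * ((1 / N : ℝ) * ∑ i, Z i) + lam * avar N α Z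

/-- `κ = ⌈(1-α)N⌉`. -/
noncomputable def kap (N : ℕ) (α : ℝ) : ℕ := ⌈(1 - α) * (N : ℝ)⌉₊

/-- The `k`-th order statistic `Z₍ₖ₎` (1-indexed), given a sorting permutation `σ`. -/
noncomputable def sortedVal (N : ℕ) (Z : Fin N → ℝ) (σ : Equiv.Perm (Fin N)) (k : ℕ) : ℝ :=
  if h : k - 1 < N then Z (σ ⟨k - 1, h⟩) else 0

/-- The worst-case weights `𝔮ᵢ` (1-indexed). -/
noncomputable def qw (N : ℕ) (α lam : ℝ) (i : ℕ) : ℝ :=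
  if i < kap N α then (1 - lam) / N
  else if i = kap N α then (1 - lam) / N + lam - lam * ((N : ℝ) - (kap N α : ℝ)) / (α * N)
  else (1 - lam) / N + lam / (α * N)

/-- The dual set `𝔄_α` of densities for `AV@R_α`. -/
def Aalpha (N : ℕ) (α : ℝ) : Set (Fin N → ℝ) :=
  {η | (∀ i, 0 ≤ η i ∧ η i ≤ 1 / α) ∧ (1 / N : ℝ) * ∑ i, η i = 1}

/-- The dual set `𝔄 = (1-λ)·1 + λ·𝔄_α` of densities for `ρ_{λ,α}`. -/
def Aset (N : ℕ) (α lam : ℝ) : Set (Fin N → ℝ) :=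
  {ζ | ∃ η ∈ Aalpha N α, ζ = fun i => (1 - lam) * 1 + lam * η i}

/-- Expectation `E_ζ[Z] = (1/N) Σᵢ ζᵢ Zᵢ` with respect to density `ζ`. -/
noncomputable def Eexp (N : ℕ) (ζ Z : Fin N → ℝ) : ℝ := (1 / N : ℝ) * ∑ i, ζ i * Z i

open Finset

/-- the infimum defining `AV@R_α(Z)` is attained at `ū = Z₍κ₎`,
`κ = ⌈(1-α)N⌉`: `AV@R_α(Z) = Z₍κ₎ + (1/(αN)) Σᵢ max(Zᵢ - Z₍κ₎, 0)`, and every `u ∈ ℝ`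
gives a value at least as large. -/
theorem avar_attained_at_var (N : ℕ) (hN : 1 ≤ N) (α : ℝ) (hα0 : 0 < α) (hα1 : α < 1)
    (Z : Fin N → ℝ) (σ : Equiv.Perm (Fin N)) (hσ : Monotone fun i => Z (σ i)) :
    avar N α Z = sortedVal N Z σ (kap N α)
        + 1 / (α * N) * ∑ i, max (Z i - sortedVal N Z σ (kap N α)) 0 ∧
    ∀ u : ℝ,
      sortedVal N Z σ (kap N α)
          + 1 / (α * N) * ∑ i, max (Z i - sortedVal N Z σ (kap N α)) 0
        ≤ u + 1 / (α * N) * ∑ i, max (Z i - u) 0 := by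
  have hNpos : (0:ℝ) < N := by exact_mod_cast hN
  set κ := kap N α with hκdef
  have hx0 : (0:ℝ) < (1-α) * N := by nlinarith
  have hκ1 : 1 ≤ κ := Nat.one_le_iff_ne_zero.mpr (by
    simp only [hκdef, kap, ne_eq, Nat.ceil_eq_zero, not_le]; exact hx0)
  have hκN : κ ≤ N := Nat.ceil_le.mpr (by nlinarith)
  have hκlb : (1-α) * N ≤ (κ:ℝ) := Nat.le_ceil _
  have hκub : (κ:ℝ) < (1-α)*N + 1 := Nat.ceil_lt_add_one hx0.le
  have hkm : κ - 1 < N := by omega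
  set ub := sortedVal N Z σ κ with hubdef
  have hubv : ub = Z (σ ⟨κ-1, hkm⟩) := by rw [hubdef, sortedVal, dif_pos hkm]
  set c : ℝ := 1 / (α * N) with hc
  have hcpos : 0 < c := by positivity
  have hc1 : c * (α * N) = 1 := by rw [hc]; field_simp
  -- card of the upper tail
  have hcard1 : ((univ.filter fun j : Fin N => κ - 1 ≤ j.val).card : ℝ) = N - κ + 1 := by
    have : (univ.filter fun j : Fin N => κ - 1 ≤ j.val) = Finset.Ici (⟨κ-1, hkm⟩ : Fin N) := by
      ext j; simp [Fin.le_def]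
    rw [this, Fin.card_Ici]
    have : N - (κ - 1) = N - κ + 1 := by omega
    rw [this]; push_cast [hκN]; ring
  have hcard2 : ((univ.filter fun j : Fin N => κ ≤ j.val).card : ℝ) = N - κ := by
    rcases Nat.lt_or_ge κ N with h | h
    · have : (univ.filter fun j : Fin N => κ ≤ j.val) = Finset.Ici (⟨κ, h⟩ : Fin N) := by
        ext j; simp [Fin.le_def]
      rw [this, Fin.card_Ici]; push_cast [hκN]; ring
    · have hκN' : κ = N := le_antisymm hκN h
      have : (univ.filter fun j : Fin N => κ ≤ j.val) = ∅ := by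
        ext j; simp only [mem_filter, mem_univ, true_and, notMem_empty, iff_false, not_le]
        omega
      rw [this]; simp [hκN']
  have hsum : ∀ v : ℝ, ∑ i, max (Z i - v) 0 = ∑ j, max (Z (σ j) - v) 0 :=
    fun v => (Equiv.sum_comp σ fun i => max (Z i - v) 0).symm
  have key : ∀ u : ℝ, ub + c * ∑ i, max (Z i - ub) 0 ≤ u + c * ∑ i, max (Z i - u) 0 := by
    intro u
    rw [hsum ub, hsum u]
    rcases le_total u ub with h | h
    · -- u ≤ ub
      have hpt : ∀ j ∈ univ, (if κ - 1 ≤ (j:Fin N).val then ub - u else 0)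
          ≤ max (Z (σ j) - u) 0 - max (Z (σ j) - ub) 0 := by
        intro j _
        have h2 : (0:ℝ) ≤ max (Z (σ j) - u) 0 := le_max_right _ _
        split_ifs with hj
        · have hz : ub ≤ Z (σ j) := by
            rw [hubv]; exact hσ (show (⟨κ-1,hkm⟩:Fin N) ≤ j by simpa [Fin.le_def] using hj)
          rw [max_eq_left (by linarith : (0:ℝ) ≤ Z (σ j) - u),
              max_eq_left (by linarith : (0:ℝ) ≤ Z (σ j) - ub)]
          linarith
        · have hz : Z (σ j) ≤ ub := by
            rw [hubv]; exact hσ (show j ≤ (⟨κ-1,hkm⟩:Fin N) by simp [Fin.le_def]; omega)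
          rw [max_eq_right (by linarith : Z (σ j) - ub ≤ (0:ℝ))]
          linarith
      have hS := Finset.sum_le_sum hpt
      rw [Finset.sum_sub_distrib, Finset.sum_ite, Finset.sum_const, Finset.sum_const_zero,
        add_zero, nsmul_eq_mul, hcard1] at hS
      -- hS : (N - κ + 1) * (ub - u) ≤ S(u) - S(ub)
      have hc2 : 1 ≤ c * ((N:ℝ) - κ + 1) := by
        have h4 : α * N ≤ (N:ℝ) - κ + 1 := by nlinarith
        have := mul_le_mul_of_nonneg_left h4 hcpos.le
        linarith
      have h1 := mul_le_mul_of_nonneg_left hS hcpos.le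
      have h2 := mul_le_mul_of_nonneg_right hc2 (by linarith : (0:ℝ) ≤ ub - u)
      have e1 : c * (((N:ℝ) - κ + 1) * (ub - u)) = c * ((N:ℝ) - κ + 1) * (ub - u) :=
        (mul_assoc _ _ _).symm
      have e2 : c * ((∑ x : Fin N, max (Z (σ x) - u) 0) - ∑ x : Fin N, max (Z (σ x) - ub) 0)
          = c * (∑ x : Fin N, max (Z (σ x) - u) 0) - c * ∑ x : Fin N, max (Z (σ x) - ub) 0 :=
        mul_sub _ _ _
      linarith
    · -- ub ≤ u
      have hpt : ∀ j ∈ univ, max (Z (σ j) - ub) 0 - max (Z (σ j) - u) 0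
          ≤ (if κ ≤ (j:Fin N).val then u - ub else 0) := by
        intro j _
        have h2 : (0:ℝ) ≤ max (Z (σ j) - u) 0 := le_max_right _ _
        have h3 : Z (σ j) - u ≤ max (Z (σ j) - u) 0 := le_max_left _ _
        split_ifs with hj
        · rcases le_total (Z (σ j)) ub with hz | hz
          · rw [max_eq_right (by linarith : Z (σ j) - ub ≤ (0:ℝ))]; linarith
          · rw [max_eq_left (by linarith : (0:ℝ) ≤ Z (σ j) - ub)]; linarith
        · have hz : Z (σ j) ≤ ub := by
            rw [hubv]; exact hσ (show j ≤ (⟨κ-1,hkm⟩:Fin N) by simp [Fin.le_def]; omega)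
          rw [max_eq_right (by linarith : Z (σ j) - ub ≤ (0:ℝ))]
          linarith
      have hS := Finset.sum_le_sum hpt
      rw [Finset.sum_sub_distrib, Finset.sum_ite, Finset.sum_const, Finset.sum_const_zero,
        add_zero, nsmul_eq_mul, hcard2] at hS
      have hc2 : c * ((N:ℝ) - κ) ≤ 1 := by
        have h4 : (N:ℝ) - κ ≤ α * N := by nlinarith
        have h5 : (0:ℝ) ≤ (N:ℝ) - κ := by
          have : (κ:ℝ) ≤ N := by exact_mod_cast hκN
          linarith
        calc c * ((N:ℝ) - κ) ≤ c * (α * N) := mul_le_mul_of_nonneg_left h4 hcpos.le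
          _ = 1 := hc1
      have h1 := mul_le_mul_of_nonneg_left hS hcpos.le
      have h2 := mul_le_mul_of_nonneg_right hc2 (by linarith : (0:ℝ) ≤ u - ub)
      have e1 : c * (((N:ℝ) - κ) * (u - ub)) = c * ((N:ℝ) - κ) * (u - ub) :=
        (mul_assoc _ _ _).symm
      have e2 : c * ((∑ x : Fin N, max (Z (σ x) - ub) 0) - ∑ x : Fin N, max (Z (σ x) - u) 0)
          = c * (∑ x : Fin N, max (Z (σ x) - ub) 0) - c * ∑ x : Fin N, max (Z (σ x) - u) 0 :=
        mul_sub _ _ _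
      linarith
  have havar : avar N α Z = ⨅ u : ℝ, (u + c * ∑ i, max (Z i - u) 0) := by
    rw [hc, avar]
  refine ⟨?_, key⟩
  rw [havar]
  refine le_antisymm (ciInf_le ⟨ub + c * ∑ i, max (Z i - ub) 0, ?_⟩ ub) (le_ciInf key)
  rintro x ⟨u, rfl⟩; exact key u
end

section
/- For every integer N ≥ 2, every α ∈ (0,1), every λ ∈ [0,1], and every Z : Fin N → ℝ, if κ := ⌈(1-α)N⌉ satisfies κ ≤ N-1, then ρ_{λ,α}(Z) = Σ_{i=1}^N 𝔮_i · Z_(i), where 𝔮_1,…,𝔮_N are the weights defined by 𝔮_i = (1-λ)/N for i < κ, 𝔮_κ = (1-λ)/N + λ - λ(N-κ)/(αN), and 𝔮_i = (1-λ)/N + λ/(αN) for i > κ. -/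
set_option maxHeartbeats 1000000 in
/-- if `N ≥ 2` and `κ = ⌈(1-α)N⌉ ≤ N-1`, then
`ρ_{λ,α}(Z) = Σᵢ 𝔮ᵢ Z₍ᵢ₎` with the weights `𝔮ᵢ` of the worst-case distribution. -/
theorem rho_eq_weighted_order_statistics (N : ℕ) (hN : 2 ≤ N) (α lam : ℝ)
    (hα0 : 0 < α) (hα1 : α < 1) (hlam0 : 0 ≤ lam) (hlam1 : lam ≤ 1)
    (hκ : kap N α ≤ N - 1)
    (Z : Fin N → ℝ) (σ : Equiv.Perm (Fin N)) (hσ : Monotone fun i => Z (σ i)) :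
    rho N α lam Z = ∑ i ∈ Finset.range N, qw N α lam (i + 1) * sortedVal N Z σ (i + 1) := by
  have hN0 : 0 < N := by omega
  have hNR : (0:ℝ) < N := by exact_mod_cast hN0
  have hαN : (0:ℝ) < α * N := mul_pos hα0 hNR
  set k := kap N α with hkdef
  have hk1 : 1 ≤ k := Nat.ceil_pos.mpr (mul_pos (by linarith) hNR)
  have hkN' : k < N := by omega
  have hceil_le : (1-α) * N ≤ (k:ℝ) := Nat.le_ceil _
  have hceil_lt : (k:ℝ) < (1-α) * N + 1 :=
    Nat.ceil_lt_add_one (le_of_lt (mul_pos (by linarith) hNR))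
  set Y : Fin N → ℝ := fun i => Z (σ i) with hYdef
  have hj : k - 1 < N := by omega
  set j : Fin N := ⟨k-1, hj⟩ with hjdef
  set u₀ := Y j with hu0
  set F : Finset (Fin N) := Finset.univ.filter (fun i => k ≤ i.val) with hFdef
  have hjF : j ∉ F := by simp [hFdef, hjdef]; omega
  have hcardF : F.card = N - k := by
    rw [hFdef, Finset.card_filter,
      Fin.sum_univ_eq_sum_range (fun i => if k ≤ i then 1 else 0), ← Finset.card_filter]
    have : (Finset.range N).filter (fun i => k ≤ i) = Finset.Ico k N := by
      ext x; simp [Finset.mem_filter, Finset.mem_Ico, and_comm]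
    rw [this, Nat.card_Ico]
  have hcardR : ((F.card : ℝ)) = (N:ℝ) - k := by
    rw [hcardF]; push_cast [Nat.cast_sub hkN'.le]; ring
  set D : ℝ := ∑ i ∈ F, (Y i - u₀) with hDdef
  set T : ℝ := ∑ i, Y i with hTdef
  set Sf : ℝ := ∑ i ∈ F, Y i with hSfdef
  have hD : D = Sf - ((N:ℝ) - k) * u₀ := by
    rw [hDdef, Finset.sum_sub_distrib, Finset.sum_const, nsmul_eq_mul, hcardR]
  -- pointwise key inequality
  have hkey : ∀ u : ℝ, u₀ + 1/(α*N) * D ≤ u + 1/(α*N) * ∑ i, max (Z i - u) 0 := by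
    intro u
    have hsum : ∑ i, max (Z i - u) 0 = ∑ i, max (Y i - u) 0 :=
      (Equiv.sum_comp σ (fun x => max (Z x - u) 0)).symm
    rw [hsum]
    set M : ℝ := ∑ i, max (Y i - u) 0 with hMdef
    set S : ℝ := ∑ i ∈ F, (Y i - u) with hSdef
    have hDS : D = S + ((N:ℝ) - k) * (u - u₀) := by
      simp only [hDdef, hSdef, Finset.sum_sub_distrib, Finset.sum_const, nsmul_eq_mul, hcardR]
      ring
    have hSM : S ≤ M := by
      calc S ≤ ∑ i ∈ F, max (Y i - u) 0 :=
              Finset.sum_le_sum (fun i _ => le_max_left _ _)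
        _ ≤ M := Finset.sum_le_sum_of_subset_of_nonneg (Finset.subset_univ _)
              (fun i _ _ => le_max_right _ _)
    have hDM : D - M ≤ α * N * (u - u₀) := by
      rcases le_or_gt u₀ u with hcase | hcase
      · have h1 : ((N:ℝ) - k) * (u - u₀) ≤ α * N * (u - u₀) := by
          apply mul_le_mul_of_nonneg_right _ (by linarith)
          nlinarith
        linarith [hDS, hSM, h1]
      · have hSM' : (u₀ - u) + S ≤ M := by
          have : (u₀ - u) + S = ∑ i ∈ insert j F, (Y i - u) := by
            rw [Finset.sum_insert hjF]
          rw [this]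
          calc ∑ i ∈ insert j F, (Y i - u) ≤ ∑ i ∈ insert j F, max (Y i - u) 0 :=
                Finset.sum_le_sum (fun i _ => le_max_left _ _)
            _ ≤ M := Finset.sum_le_sum_of_subset_of_nonneg (Finset.subset_univ _)
                (fun i _ _ => le_max_right _ _)
        have h1 : ((N:ℝ) - k + 1) * (u - u₀) ≤ α * N * (u - u₀) := by
          apply mul_le_mul_of_nonpos_right _ (by linarith)
          nlinarith
        nlinarith [hDS, hSM']
    have hcpos : (0:ℝ) < 1/(α*N) := by positivity
    have h2 : 1/(α*N) * (D - M) ≤ 1/(α*N) * (α * N * (u - u₀)) :=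
      mul_le_mul_of_nonneg_left hDM hcpos.le
    have h3 : 1/(α*N) * (α * N * (u - u₀)) = u - u₀ := by
      field_simp
    nlinarith [h2, h3]
  -- value at u₀
  have hval : ∑ i, max (Y i - u₀) 0 = D := by
    rw [hDdef, ← Finset.sum_filter_add_sum_filter_not Finset.univ (fun i => k ≤ i.val), ← hFdef]
    have h1 : ∀ i ∈ F, max (Y i - u₀) 0 = Y i - u₀ := by
      intro i hi
      have hki : k ≤ i.val := by simpa [hFdef] using hi
      have : j ≤ i := by rw [hjdef, Fin.le_def]; simp; omega
      have := hσ this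
      simp only [hu0]
      exact max_eq_left (by simpa using sub_nonneg.mpr this)
    have h2 : ∀ i ∈ Finset.univ.filter (fun i : Fin N => ¬ k ≤ i.val),
        max (Y i - u₀) 0 = 0 := by
      intro i hi
      have hki : i.val < k := by simpa [Finset.mem_filter] using hi
      have : i ≤ j := by rw [hjdef, Fin.le_def]; simp; omega
      have := hσ this
      exact max_eq_right (by simpa using sub_nonpos.mpr this)
    rw [Finset.sum_congr rfl h1, Finset.sum_congr rfl h2]
    simp
  have havar : avar N α Z = u₀ + 1/(α*N) * D := by
    have hfu0 : u₀ + 1 / (α * ↑N) * ∑ i, max (Z i - u₀) 0 = u₀ + 1/(α*N) * D := by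
      rw [show ∑ i, max (Z i - u₀) 0 = ∑ i, max (Y i - u₀) 0 from
        (Equiv.sum_comp σ (fun x => max (Z x - u₀) 0)).symm, hval]
    apply le_antisymm
    · calc avar N α Z ≤ u₀ + 1 / (α * ↑N) * ∑ i, max (Z i - u₀) 0 :=
            ciInf_le ⟨u₀ + 1/(α*N) * D, by rintro _ ⟨u, rfl⟩; exact hkey u⟩ u₀
        _ = u₀ + 1/(α*N) * D := hfu0
    · exact le_ciInf hkey
  -- right-hand side
  have hRHS : ∑ i ∈ Finset.range N, qw N α lam (i + 1) * sortedVal N Z σ (i + 1)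
      = (1-lam)/N * T + (lam - lam * ((N:ℝ) - k)/(α*N)) * u₀ + lam/(α*N) * Sf := by
    rw [← Fin.sum_univ_eq_sum_range (fun i => qw N α lam (i+1) * sortedVal N Z σ (i+1)) N]
    have hterm : ∀ i : Fin N, qw N α lam (i.val+1) * sortedVal N Z σ (i.val+1)
        = (1-lam)/N * Y i + (if i = j then (lam - lam * ((N:ℝ) - k)/(α*N)) * Y i else 0)
          + (if i ∈ F then lam/(α*N) * Y i else 0) := by
      intro i
      have hsv : sortedVal N Z σ (i.val+1) = Y i := by
        rw [sortedVal]
        simp only [Nat.add_sub_cancel]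
        rw [dif_pos i.isLt]
      rw [hsv, qw, ← hkdef]
      rcases lt_trichotomy (i.val+1) k with h | h | h
      · rw [if_pos h, if_neg (by simp [hjdef, Fin.ext_iff]; omega),
          if_neg (by simp [hFdef]; omega)]
        ring
      · rw [if_neg (by omega), if_pos h, if_pos (by simp [hjdef, Fin.ext_iff]; omega),
          if_neg (by simp [hFdef]; omega)]
        ring
      · rw [if_neg (by omega), if_neg (by omega), if_neg (by simp [hjdef, Fin.ext_iff]; omega),
          if_pos (by simp [hFdef]; omega)]
        ring
    rw [Finset.sum_congr rfl (fun i _ => hterm i), Finset.sum_add_distrib,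
      Finset.sum_add_distrib, ← Finset.mul_sum, ← hTdef,
      Finset.sum_ite_eq' Finset.univ j, if_pos (Finset.mem_univ j),
      Finset.sum_ite_mem, Finset.univ_inter, ← Finset.mul_sum, ← hSfdef, ← hu0]
  rw [hRHS, rho, havar, hD,
    show ∑ i, Z i = T by rw [hTdef]; exact (Equiv.sum_comp σ Z).symm]
  field_simp
  ring
end

section
/- For every integer N ≥ 1, every α ∈ (0,1), and every Z : Fin N → ℝ, AV@R_α(Z) admits the dual representation AV@R_α(Z) = sup_{η ∈ 𝔄_α} (1/N) Σ_{i=1}^N η_i Z_i, and the supremum is attained at some η ∈ 𝔄_α. -/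
lemma eexp_le (N : ℕ) (hN : 1 ≤ N) (α : ℝ) (hα0 : 0 < α) (Z η : Fin N → ℝ)
    (hη : η ∈ Aalpha N α) (u : ℝ) :
    Eexp N η Z ≤ u + 1 / (α * N) * ∑ i, max (Z i - u) 0 := by
  obtain ⟨hb, hsum⟩ := hη
  have hNpos : (0:ℝ) < N := by exact_mod_cast Nat.pos_of_ne_zero (by omega)
  have hsum' : ∑ i, η i = N := by
    field_simp at hsum; linarith
  have key : ∑ i, η i * Z i = ∑ i, η i * (Z i - u) + (∑ i, η i) * u := by
    rw [Finset.sum_mul, ← Finset.sum_add_distrib]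
    exact Finset.sum_congr rfl fun i _ => by ring
  have hle : ∑ i, η i * (Z i - u) ≤ ∑ i, (1/α) * max (Z i - u) 0 := by
    apply Finset.sum_le_sum
    intro i _
    rcases le_or_gt u (Z i) with h | h
    · rw [max_eq_left (by linarith)]
      exact mul_le_mul_of_nonneg_right (hb i).2 (by linarith)
    · rw [max_eq_right (by linarith), mul_zero]
      exact mul_nonpos_of_nonneg_of_nonpos (hb i).1 (by linarith)
  have heq : Eexp N η Z = (1/N:ℝ) * ∑ i, η i * (Z i - u) + u := by
    unfold Eexp
    rw [key, mul_add, hsum']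
    field_simp
  rw [heq]
  have h2 : (1/N:ℝ) * ∑ i, η i * (Z i - u) ≤ (1/N:ℝ) * ∑ i, (1/α) * max (Z i - u) 0 :=
    mul_le_mul_of_nonneg_left hle (by positivity)
  have h3 : (1/N:ℝ) * ∑ i, (1/α) * max (Z i - u) 0 = 1 / (α * N) * ∑ i, max (Z i - u) 0 := by
    rw [← Finset.mul_sum]
    ring
  linarith

lemma exists_ustar (N k : ℕ) (hk : 1 ≤ k) (hkN : k ≤ N) (Z : Fin N → ℝ) :
    ∃ u : ℝ, k ≤ (Finset.univ.filter (fun i => u ≤ Z i)).card ∧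
      (Finset.univ.filter (fun i => u < Z i)).card < k := by
  haveI : Nonempty (Fin N) := Fin.pos_iff_nonempty.mp (by omega)
  set S : Finset (Fin N) :=
    Finset.univ.filter (fun j => k ≤ (Finset.univ.filter (fun i => Z j ≤ Z i)).card) with hS
  have hSne : S.Nonempty := by
    obtain ⟨j₀, _, hj₀⟩ := Finset.exists_min_image Finset.univ Z Finset.univ_nonempty
    refine ⟨j₀, ?_⟩
    simp only [hS, Finset.mem_filter, Finset.mem_univ, true_and]
    have : Finset.univ.filter (fun i => Z j₀ ≤ Z i) = Finset.univ := by
      apply Finset.filter_true_of_mem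
      intro i _
      exact hj₀ i (Finset.mem_univ i)
    rw [this, Finset.card_univ, Fintype.card_fin]
    exact hkN
  obtain ⟨j, hjS, hjmax⟩ := Finset.exists_max_image S Z hSne
  refine ⟨Z j, ?_, ?_⟩
  · simp only [hS, Finset.mem_filter, Finset.mem_univ, true_and] at hjS
    exact hjS
  · by_contra hcon
    push_neg at hcon
    set B := Finset.univ.filter (fun i => Z j < Z i) with hB
    have hBne : B.Nonempty := Finset.card_pos.mp (by omega)
    obtain ⟨j', hj'B, hj'min⟩ := Finset.exists_min_image B Z hBne
    have hj'S : j' ∈ S := by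
      simp only [hS, Finset.mem_filter, Finset.mem_univ, true_and]
      calc k ≤ B.card := hcon
        _ ≤ (Finset.univ.filter (fun i => Z j' ≤ Z i)).card := by
            apply Finset.card_le_card
            intro i hi
            have := hj'min i hi
            simp only [Finset.mem_filter, Finset.mem_univ, true_and]
            exact this
    have h1 : Z j' ≤ Z j := hjmax j' hj'S
    simp only [hB, Finset.mem_filter, Finset.mem_univ, true_and] at hj'B
    linarith


/-- dual representation of `AV@R_α`:
`AV@R_α(Z) = sup_{η ∈ 𝔄_α} (1/N) Σᵢ ηᵢ Zᵢ`, with the supremum attained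
(i.e. `AV@R_α(Z)` is the greatest element of the set of dual objective values). -/
theorem avar_dual_representation (N : ℕ) (hN : 1 ≤ N) (α : ℝ) (hα0 : 0 < α) (hα1 : α < 1)
    (Z : Fin N → ℝ) :
    IsGreatest {v : ℝ | ∃ η ∈ Aalpha N α, v = Eexp N η Z} (avar N α Z) := by
  have hNpos : (0:ℝ) < N := by exact_mod_cast Nat.pos_of_ne_zero (by omega)
  -- the constant density 1 is in Aalpha
  have hone : (fun _ : Fin N => (1:ℝ)) ∈ Aalpha N α := by
    refine ⟨fun i => ⟨?_, ?_⟩, ?_⟩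
    · show (0:ℝ) ≤ 1; norm_num
    · show (1:ℝ) ≤ 1 / α
      rw [le_div_iff₀ hα0, one_mul]; linarith
    · simp [Finset.card_univ]
      field_simp
  -- bddBelow of the range
  have hbdd : BddBelow (Set.range fun u : ℝ => u + 1 / (α * N) * ∑ i, max (Z i - u) 0) := by
    refine ⟨Eexp N (fun _ => 1) Z, ?_⟩
    rintro x ⟨u, rfl⟩
    exact eexp_le N hN α hα0 Z _ hone u
  -- upper bound part
  have hub : ∀ v ∈ {v : ℝ | ∃ η ∈ Aalpha N α, v = Eexp N η Z}, v ≤ avar N α Z := by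
    rintro v ⟨η, hη, rfl⟩
    exact le_ciInf (eexp_le N hN α hα0 Z η hη)
  -- construct the optimal η
  set k := ⌈α * N⌉₊ with hkdef
  have hk1 : 1 ≤ k := Nat.one_le_ceil_iff.mpr (by positivity)
  have hkN : k ≤ N := Nat.ceil_le.mpr (by nlinarith)
  obtain ⟨u, hA, hB⟩ := exists_ustar N k hk1 hkN Z
  set A := Finset.univ.filter (fun i => u ≤ Z i) with hAdef
  set B := Finset.univ.filter (fun i => u < Z i) with hBdef
  set M := A.card with hMdef
  set m := B.card with hmdef
  have hmαN : (m:ℝ) < α * N := by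
    have := Nat.lt_ceil.mp hB
    exact this
  have hαNM : α * N ≤ (M:ℝ) := le_trans (Nat.le_ceil _) (by exact_mod_cast hA)
  have hmM : m < M := by exact_mod_cast lt_of_lt_of_le hmαN hαNM
  set c : ℝ := (α * N - m) / ((M:ℝ) - m) with hcdef
  have hMm : (0:ℝ) < (M:ℝ) - m := by
    have : (m:ℝ) < M := by exact_mod_cast hmM
    linarith
  have hc0 : 0 ≤ c := div_nonneg (by linarith) (by linarith)
  have hc1 : c ≤ 1 := by
    rw [div_le_one hMm]
    linarith
  set t : Fin N → ℝ := fun i => if u < Z i then 1 else if Z i = u then c else 0 with htdef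
  set η : Fin N → ℝ := fun i => t i / α with hηdef
  -- B ⊆ A
  have hBA : B ⊆ A := by
    intro i hi
    simp only [hBdef, Finset.mem_filter, Finset.mem_univ, true_and] at hi
    simp only [hAdef, Finset.mem_filter, Finset.mem_univ, true_and]
    linarith
  have hC : Finset.univ.filter (fun i => Z i = u) = A \ B := by
    ext i
    simp only [hAdef, hBdef, Finset.mem_filter, Finset.mem_univ, true_and, Finset.mem_sdiff]
    constructor
    · intro h
      constructor
      · try simp only [Finset.mem_filter, Finset.mem_univ, true_and]
        linarith
      · try simp only [Finset.mem_filter, Finset.mem_univ, true_and]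
        intro h'
        linarith
    · rintro ⟨h1, h2⟩
      try simp only [Finset.mem_filter, Finset.mem_univ, true_and] at h1 h2
      push_neg at h2
      linarith
  have hCcard : (Finset.univ.filter (fun i => Z i = u)).card = M - m := by
    rw [hC, Finset.card_sdiff_of_subset hBA]
  -- sum of t
  have hsum_t : ∑ i, t i = α * N := by
    have hpt : ∀ i, t i = (if u < Z i then (1:ℝ) else 0) + c * (if Z i = u then (1:ℝ) else 0) := by
      intro i
      simp only [htdef]
      split_ifs with h1 h2 h2 <;> try ring
      · linarith
    rw [Finset.sum_congr rfl (fun i _ => hpt i), Finset.sum_add_distrib, ← Finset.mul_sum,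
      Finset.sum_boole, Finset.sum_boole, hCcard, Nat.cast_sub (le_of_lt hmM)]
    have hcard : ((Finset.filter (fun x => u < Z x) Finset.univ).card : ℝ) = (m:ℝ) := rfl
    rw [hcard]
    have hcc : c * ((M:ℝ) - (m:ℝ)) = α * N - m := by
      show (α * N - m) / ((M:ℝ) - m) * ((M:ℝ) - (m:ℝ)) = α * N - m
      exact div_mul_cancel₀ _ (ne_of_gt hMm)
    rw [hcc]
    ring
  -- η in Aalpha
  have hηA : η ∈ Aalpha N α := by
    constructor
    · intro i
      simp only [hηdef, htdef]
      split_ifs with h1 h2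
      · constructor
        · positivity
        · rw [div_le_div_iff₀ hα0 hα0]
      · constructor
        · positivity
        · rw [div_le_div_iff₀ hα0 hα0]; nlinarith
      · constructor
        · simp [le_div_iff₀ hα0]
        · rw [div_le_div_iff₀ hα0 hα0]; nlinarith
    · simp only [hηdef]
      rw [← Finset.sum_div, hsum_t]
      field_simp
  -- key pointwise identity
  have hpt2 : ∀ i, t i * (Z i - u) = max (Z i - u) 0 := by
    intro i
    simp only [htdef]
    split_ifs with h1 h2
    · rw [max_eq_left (by linarith)]; ring
    · rw [h2]; simp
    · rw [max_eq_right (by push_neg at h1; linarith)]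
      ring
  -- Eexp η Z equals the objective at u
  have hEeq : Eexp N η Z = u + 1 / (α * N) * ∑ i, max (Z i - u) 0 := by
    unfold Eexp
    have h1 : ∑ i, η i * Z i = (1/α) * ∑ i, t i * Z i := by
      rw [Finset.mul_sum]
      exact Finset.sum_congr rfl fun i _ => by simp only [hηdef]; ring
    have h2 : ∑ i, t i * Z i = ∑ i, t i * (Z i - u) + (∑ i, t i) * u := by
      rw [Finset.sum_mul, ← Finset.sum_add_distrib]
      exact Finset.sum_congr rfl fun i _ => by ring
    have h3 : ∑ i, t i * (Z i - u) = ∑ i, max (Z i - u) 0 :=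
      Finset.sum_congr rfl fun i _ => hpt2 i
    rw [h1, h2, h3, hsum_t]
    field_simp
    ring
  -- avar ≤ Eexp η Z
  have hle1 : avar N α Z ≤ Eexp N η Z := by
    rw [hEeq]
    exact ciInf_le hbdd u
  have hle2 : Eexp N η Z ≤ avar N α Z := hub _ ⟨η, hηA, rfl⟩
  have heq : avar N α Z = Eexp N η Z := le_antisymm hle1 hle2
  exact ⟨⟨η, hηA, heq⟩, hub⟩
end

section
/- For every integer N ≥ 1, every α ∈ (0,1), and every Z : Fin N → ℝ, an element η ∈ 𝔄_α satisfies (1/N)Σ_{i=1}^N η_i Z_i = AV@R_α(Z) (i.e., η is a maximizer of the dual representation of AV@R_α) if and only if η_i = 1/α for every i with Z_i > Z_(κ) and η_i = 0 for every i with Z_i < Z_(κ), where κ = ⌈(1-α)N⌉. -/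
/-- `η ∈ 𝔄_α` maximizes the dual representation of `AV@R_α` (i.e.
`(1/N)Σᵢ ηᵢ Zᵢ = AV@R_α(Z)`) iff `ηᵢ = 1/α` whenever `Zᵢ > Z₍κ₎` and `ηᵢ = 0`
whenever `Zᵢ < Z₍κ₎`, where `κ = ⌈(1-α)N⌉`. -/
theorem avar_maximizer_characterization (N : ℕ) (hN : 1 ≤ N) (α : ℝ)
    (hα0 : 0 < α) (hα1 : α < 1)
    (Z : Fin N → ℝ) (σ : Equiv.Perm (Fin N)) (hσ : Monotone fun i => Z (σ i))
    (η : Fin N → ℝ) (hη : η ∈ Aalpha N α) :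
    Eexp N η Z = avar N α Z ↔
      (∀ i, sortedVal N Z σ (kap N α) < Z i → η i = 1 / α) ∧
      (∀ i, Z i < sortedVal N Z σ (kap N α) → η i = 0) := by
  classical
  obtain ⟨hηb, hηs⟩ := hη
  have hNpos : (0:ℝ) < N := by exact_mod_cast hN
  have hα1' : (0:ℝ) ≤ 1 - α := by linarith
  have hκ_le : ((1-α) * N : ℝ) ≤ kap N α := Nat.le_ceil _
  have hκ_lt : ((kap N α : ℕ) : ℝ) < (1-α) * N + 1 :=
    Nat.ceil_lt_add_one (mul_nonneg hα1' hNpos.le)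
  have hκ1 : 1 ≤ kap N α := Nat.ceil_pos.mpr (by nlinarith)
  have hκN : kap N α ≤ N := Nat.ceil_le.mpr (by nlinarith)
  set κ := kap N α with hκdef
  have hk0 : κ - 1 < N := by omega
  set k0 : Fin N := ⟨κ - 1, hk0⟩ with hk0def
  set t : ℝ := Z (σ k0) with htdef
  have ht : sortedVal N Z σ κ = t := by rw [sortedVal, dif_pos hk0]
  have hαN : (0:ℝ) < α * N := mul_pos hα0 hNpos
  -- cast facts about κ
  have hκR_ub : ((N:ℝ) - κ) ≤ α * N := by
    push_cast at hκ_le ⊢; nlinarith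
  have hκR_lb : α * N ≤ (N:ℝ) - κ + 1 := by
    push_cast at hκ_lt ⊢; nlinarith
  -- counting
  set A : Finset (Fin N) := Finset.univ.filter (fun i => t < Z i) with hA
  set B : Finset (Fin N) := Finset.univ.filter (fun i => t ≤ Z i) with hB
  have hcardA : (A.card : ℝ) ≤ (N:ℝ) - κ := by
    have himg : A = Finset.image σ (Finset.univ.filter (fun j => t < Z (σ j))) := by
      ext i
      simp only [hA, Finset.mem_filter, Finset.mem_univ, true_and, Finset.mem_image]
      constructor
      · intro h; exact ⟨σ⁻¹ i, by simpa using h, by simp⟩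
      · rintro ⟨j, hj, rfl⟩; exact hj
    have hsub : Finset.univ.filter (fun j => t < Z (σ j)) ⊆ Finset.Ioi k0 := by
      intro j hj
      simp only [Finset.mem_filter, Finset.mem_univ, true_and] at hj
      rw [Finset.mem_Ioi]
      by_contra h
      exact absurd (hσ (not_lt.mp h)) (not_le.mpr hj)
    have h1 : A.card ≤ N - 1 - (κ - 1) := by
      rw [himg, Finset.card_image_of_injective _ σ.injective]
      calc (Finset.univ.filter (fun j => t < Z (σ j))).card
          ≤ (Finset.Ioi k0).card := Finset.card_le_card hsub
        _ = N - 1 - (κ - 1) := by rw [Fin.card_Ioi]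
    have h2 : A.card ≤ N - κ := by omega
    have h3 : ((A.card : ℕ) : ℝ) ≤ ((N - κ : ℕ) : ℝ) := Nat.cast_le.mpr h2
    rwa [Nat.cast_sub hκN] at h3
  have hcardB : (N:ℝ) - κ + 1 ≤ (B.card : ℝ) := by
    have himg : B = Finset.image σ (Finset.univ.filter (fun j => t ≤ Z (σ j))) := by
      ext i
      simp only [hB, Finset.mem_filter, Finset.mem_univ, true_and, Finset.mem_image]
      constructor
      · intro h; exact ⟨σ⁻¹ i, by simpa using h, by simp⟩
      · rintro ⟨j, hj, rfl⟩; exact hj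
    have hsub : Finset.Ici k0 ⊆ Finset.univ.filter (fun j => t ≤ Z (σ j)) := by
      intro j hj
      rw [Finset.mem_Ici] at hj
      simp only [Finset.mem_filter, Finset.mem_univ, true_and]
      exact hσ hj
    have h1 : N - (κ - 1) ≤ B.card := by
      rw [himg, Finset.card_image_of_injective _ σ.injective]
      calc N - (κ - 1) = (Finset.Ici k0).card := by rw [Fin.card_Ici]
        _ ≤ _ := Finset.card_le_card hsub
    have h2 : N - κ + 1 ≤ B.card := by omega
    have h3 : ((N - κ + 1 : ℕ) : ℝ) ≤ ((B.card : ℕ) : ℝ) := Nat.cast_le.mpr h2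
    rw [Nat.cast_add, Nat.cast_sub hκN] at h3
    simpa using h3
  -- the objective is minimized at u = t
  have hmin : ∀ u : ℝ, t + 1 / (α * N) * ∑ i, max (Z i - t) 0
      ≤ u + 1 / (α * N) * ∑ i, max (Z i - u) 0 := by
    intro u
    have hc : 1 / (α * N) * (α * N) = 1 := by field_simp
    have hcpos : (0:ℝ) < 1 / (α * N) := by positivity
    rcases le_total t u with hu | hu
    · -- u ≥ t
      have hsum : ∑ i, (max (Z i - t) 0 - max (Z i - u) 0) ≤ (A.card : ℝ) * (u - t) := by
        calc ∑ i, (max (Z i - t) 0 - max (Z i - u) 0)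
            ≤ ∑ i, (if t < Z i then u - t else 0) := by
              apply Finset.sum_le_sum
              intro i _
              by_cases h : t < Z i
              · simp only [h, if_pos]
                have h1 : max (Z i - t) 0 = Z i - t := max_eq_left (by linarith)
                have h2 : Z i - u ≤ max (Z i - u) 0 := le_max_left _ _
                linarith
              · simp only [h, if_neg, not_false_iff]
                have h1 : max (Z i - t) 0 = 0 := max_eq_right (by push_neg at h; linarith)
                have h2 : (0:ℝ) ≤ max (Z i - u) 0 := le_max_right _ _
                linarith
          _ = (A.card : ℝ) * (u - t) := by
              rw [← Finset.sum_filter, Finset.sum_const, nsmul_eq_mul]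
      have hdiff : ∑ i, max (Z i - t) 0 - ∑ i, max (Z i - u) 0 ≤ (α * N) * (u - t) := by
        rw [← Finset.sum_sub_distrib]
        have := mul_le_mul_of_nonneg_right (hcardA.trans hκR_ub) (sub_nonneg.mpr hu)
        linarith
      have hkey := mul_le_mul_of_nonneg_left hdiff hcpos.le
      rw [mul_sub, ← mul_assoc, hc, one_mul] at hkey
      linarith
    · -- u ≤ t
      have hsum : (B.card : ℝ) * (t - u) ≤ ∑ i, (max (Z i - u) 0 - max (Z i - t) 0) := by
        calc (B.card : ℝ) * (t - u)
            = ∑ i, (if t ≤ Z i then t - u else 0) := by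
              rw [← Finset.sum_filter, Finset.sum_const, nsmul_eq_mul]
          _ ≤ _ := by
              apply Finset.sum_le_sum
              intro i _
              by_cases h : t ≤ Z i
              · simp only [h, if_pos]
                have h1 : max (Z i - u) 0 = Z i - u := max_eq_left (by linarith)
                have h2 : max (Z i - t) 0 = Z i - t := max_eq_left (by linarith)
                linarith
              · simp only [h, if_neg, not_false_iff]
                push_neg at h
                have h1 : max (Z i - t) 0 = 0 := max_eq_right (by linarith)
                have h2 : (0:ℝ) ≤ max (Z i - u) 0 := le_max_right _ _
                linarith
      have hdiff : (α * N) * (t - u) ≤ ∑ i, max (Z i - u) 0 - ∑ i, max (Z i - t) 0 := by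
        rw [← Finset.sum_sub_distrib]
        have := mul_le_mul_of_nonneg_right (hκR_lb.trans hcardB) (sub_nonneg.mpr hu)
        linarith
      have hkey : t - u ≤ 1 / (α * N) * ∑ i, max (Z i - u) 0
          - 1 / (α * N) * ∑ i, max (Z i - t) 0 := by
        calc t - u = 1 / (α * N) * ((α * N) * (t - u)) := by field_simp
          _ ≤ 1 / (α * N) * (∑ i, max (Z i - u) 0 - ∑ i, max (Z i - t) 0) :=
              mul_le_mul_of_nonneg_left hdiff hcpos.le
          _ = _ := by ring
      linarith
  have havar : avar N α Z = t + 1 / (α * N) * ∑ i, max (Z i - t) 0 := by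
    unfold avar
    apply le_antisymm
    · exact ciInf_le ⟨_, by rintro x ⟨u, rfl⟩; exact hmin u⟩ t
    · exact le_ciInf hmin
  -- sum of η equals N
  have hS : ∑ i, η i = N := by
    have := hηs
    field_simp at this
    linarith [this]
  -- rewrite Eexp
  have hEexp : Eexp N η Z = t + (1 / N : ℝ) * ∑ i, η i * (Z i - t) := by
    unfold Eexp
    have h1 : ∑ i, η i * (Z i - t) = (∑ i, η i * Z i) - (∑ i, η i) * t := by
      simp [mul_sub, Finset.sum_sub_distrib, Finset.sum_mul]
    rw [h1, hS]
    field_simp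
    ring
  have hgt : t + 1 / (α * N) * ∑ i, max (Z i - t) 0
      = t + (1 / N : ℝ) * ∑ i, (1/α) * max (Z i - t) 0 := by
    rw [← Finset.mul_sum]
    congr 1
    rw [← mul_assoc, one_div_mul_one_div, mul_comm (N:ℝ) α]
  -- termwise bound
  have hterm : ∀ i ∈ Finset.univ, η i * (Z i - t) ≤ (1/α) * max (Z i - t) 0 := by
    intro i _
    rcases le_or_gt (Z i) t with h | h
    · have h1 : η i * (Z i - t) ≤ 0 := mul_nonpos_of_nonneg_of_nonpos (hηb i).1 (by linarith)
      have h2 : (0:ℝ) ≤ (1/α) * max (Z i - t) 0 := by positivity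
      linarith
    · have h1 : max (Z i - t) 0 = Z i - t := max_eq_left (by linarith)
      rw [h1]
      exact mul_le_mul_of_nonneg_right (hηb i).2 (by linarith)
  -- main equivalence
  rw [ht, havar, hgt, hEexp]
  have hcancel : (t + (1 / N : ℝ) * ∑ i, η i * (Z i - t)
      = t + (1 / N : ℝ) * ∑ i, (1/α) * max (Z i - t) 0)
      ↔ ∑ i, η i * (Z i - t) = ∑ i, (1/α) * max (Z i - t) 0 := by
    constructor
    · intro h
      have hne : (1 / N : ℝ) ≠ 0 := by positivity
      have := add_left_cancel h
      exact mul_left_cancel₀ hne this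
    · intro h; rw [h]
  rw [hcancel, Finset.sum_eq_sum_iff_of_le hterm]
  constructor
  · intro h
    constructor
    · intro i hi
      have := h i (Finset.mem_univ i)
      have h1 : max (Z i - t) 0 = Z i - t := max_eq_left (by linarith)
      rw [h1] at this
      exact mul_right_cancel₀ (by linarith : Z i - t ≠ 0) this
    · intro i hi
      have := h i (Finset.mem_univ i)
      have h1 : max (Z i - t) 0 = 0 := max_eq_right (by linarith)
      rw [h1, mul_zero] at this
      have h2 : Z i - t ≠ 0 := by linarith
      exact (mul_eq_zero.mp this).resolve_right h2
  · rintro ⟨h1, h2⟩ i _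
    rcases lt_trichotomy (Z i) t with h | h | h
    · rw [h2 i h, max_eq_right (by linarith), zero_mul, mul_zero]
    · simp [h]
    · rw [h1 i h, max_eq_left (by linarith)]
end

section
/- Let N ≥ 1 be an integer, α ∈ (0,1), λ ∈ (0,1], and Z : Fin N → ℝ. An element ζ ∈ 𝔄 satisfies E_ζ[Z] = ρ_{λ,α}(Z) (i.e., ζ maximizes E_ζ[Z] over 𝔄) if and only if ζ = (1-λ)·1 + λ·η for some η ∈ 𝔄_α with (1/N)Σ_{i=1}^N η_i Z_i = AV@R_α(Z). -/
lemma Eexp_mix (N : ℕ) (lam : ℝ) (η Z : Fin N → ℝ) :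
    Eexp N (fun i => (1 - lam) * 1 + lam * η i) Z
      = (1 - lam) * ((1 / N : ℝ) * ∑ i, Z i) + lam * Eexp N η Z := by
  simp only [Eexp, add_mul, mul_assoc, Finset.sum_add_distrib, Finset.mul_sum]
  ring_nf
  rw [Finset.mul_sum, Finset.mul_sum]
  congr 1 <;> exact Finset.sum_congr rfl fun i _ => by ring

/-- for `λ ∈ (0,1]`, an element `ζ ∈ 𝔄` maximizes `E_ζ[Z]` over `𝔄`
(i.e. `E_ζ[Z] = ρ_{λ,α}(Z)`) iff `ζ = (1-λ)·1 + λ·η` for some `η ∈ 𝔄_α` with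
`(1/N)Σᵢ ηᵢ Zᵢ = AV@R_α(Z)`. -/
theorem rho_maximizer_characterization (N : ℕ) (hN : 1 ≤ N) (α lam : ℝ)
    (hα0 : 0 < α) (hα1 : α < 1) (hlam0 : 0 < lam) (hlam1 : lam ≤ 1)
    (Z : Fin N → ℝ) (ζ : Fin N → ℝ) (hζ : ζ ∈ Aset N α lam) :
    Eexp N ζ Z = rho N α lam Z ↔
      ∃ η ∈ Aalpha N α, (ζ = fun i => (1 - lam) * 1 + lam * η i) ∧
        Eexp N η Z = avar N α Z := by
  obtain ⟨η, hη, hζeq⟩ := hζ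
  constructor
  · intro h
    refine ⟨η, hη, hζeq, ?_⟩
    rw [hζeq, Eexp_mix, rho] at h
    have := add_left_cancel h
    exact mul_left_cancel₀ (ne_of_gt hlam0) this
  · rintro ⟨η', hη', hζeq', havar⟩
    rw [hζeq', Eexp_mix, havar, rho]
end

section
/- Fix an integer N ≥ 1, α ∈ (0,1), λ ∈ [0,1], and Z : Fin N → ℝ. Let σ be a permutation of {1,…,N} such that i ↦ Z(σ(i)) is monotone nondecreasing, and define ζ̄ : Fin N → ℝ by ζ̄_{σ(i)} := N·𝔮_i for i = 1,…,N (with κ = ⌈(1-α)N⌉). Then ζ̄ ∈ 𝔄 (i.e., ζ̄ = (1-λ)·1 + λ·η for some η ∈ 𝔄_α) and E_{ζ̄}[Z] = ρ_{λ,α}(Z); that is, the worst-case probability density for ρ_{λ,α} at Z is obtained by assigning weight 𝔮_i to the outcome with the i-th smallest value of Z. -/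
/-
The bound `E_η[Z] ≤ u + (1/(αN)) Σᵢ (Zᵢ - u)⁺` holds for every `η ∈ 𝔄_α` and every `u`, because
`0 ≤ α ηᵢ ≤ 1` gives `α ηᵢ (Zᵢ - u) ≤ (Zᵢ - u)⁺` termwise. So `AV@R_α(Z) = E_η[Z]` as soon as
equality holds termwise for one `u`. For the density that puts mass `0` below the `κ`-th order
statistic, `1/α` above it, and the remainder at it, this happens at `u` equal to that order
statistic. The worst-case density of `ρ_{λ,α}` is `(1-λ) + λ η` for this `η`.
-/

open Finset

section Kappa

variable {N : ℕ} {α : ℝ}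

lemma one_le_kap (hN : 1 ≤ N) (hα1 : α < 1) : 1 ≤ kap N α :=
  Nat.ceil_pos.mpr (mul_pos (by linarith) (by exact_mod_cast hN))

lemma kap_le (hα0 : 0 ≤ α) : kap N α ≤ N :=
  Nat.ceil_le.mpr (by nlinarith [(N.cast_nonneg : (0 : ℝ) ≤ N)])

lemma le_kap : (1 - α) * N ≤ kap N α := Nat.le_ceil _

lemma kap_lt (hα1 : α ≤ 1) : (kap N α : ℝ) < (1 - α) * N + 1 :=
  Nat.ceil_lt_add_one (mul_nonneg (by linarith) N.cast_nonneg)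

lemma exists_fin_succ_eq_kap (hN : 1 ≤ N) (hα0 : 0 ≤ α) (hα1 : α < 1) :
    ∃ i₀ : Fin N, (i₀ : ℕ) + 1 = kap N α := by
  have h1 := one_le_kap hN hα1
  have h2 := kap_le (N := N) hα0
  exact ⟨⟨kap N α - 1, by omega⟩, by simp only; omega⟩

end Kappa

/-- `N·𝔮_k` at `λ = 1`: the worst-case density of `AV@R_α` on the `k`-th smallest outcome. -/
noncomputable def avarDensity (N : ℕ) (α : ℝ) (k : ℕ) : ℝ :=
  if k < kap N α then 0
  else if k = kap N α then N - (N - kap N α) / α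
  else 1 / α

section AvarDensity

variable {N : ℕ} {α : ℝ}

lemma mul_qw_eq (hN : (N : ℝ) ≠ 0) (hα : α ≠ 0) (lam : ℝ) (k : ℕ) :
    (N : ℝ) * qw N α lam k = (1 - lam) + lam * avarDensity N α k := by
  unfold qw avarDensity
  split_ifs <;> field_simp <;> ring

lemma avarDensity_mem_Icc (hα0 : 0 < α) (hα1 : α ≤ 1) (k : ℕ) :
    avarDensity N α k ∈ Set.Icc 0 (1 / α) := by
  have hle := le_kap (N := N) (α := α)
  have hlt := kap_lt (N := N) hα1
  unfold avarDensity
  split_ifs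
  · exact ⟨le_rfl, by positivity⟩
  · constructor
    · rw [sub_nonneg, div_le_iff₀ hα0]; linarith
    · rw [sub_le_iff_le_add, ← add_div, le_div_iff₀ hα0]; linarith
  · exact ⟨by positivity, le_rfl⟩

lemma sum_avarDensity (hN : 1 ≤ N) (hα0 : 0 < α) (hα1 : α < 1) :
    ∑ i : Fin N, avarDensity N α (i + 1) = N := by
  have hκN : kap N α ≤ N := kap_le hα0.le
  obtain ⟨m, hm⟩ : ∃ m, kap N α = m + 1 := Nat.exists_eq_add_of_le' (one_le_kap hN hα1)
  have below : ∑ k ∈ range m, avarDensity N α (k + 1) = 0 :=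
    sum_eq_zero fun k hk => if_pos (by rw [mem_range] at hk; omega)
  have at_kap : avarDensity N α (m + 1) = N - (N - kap N α) / α := by
    rw [avarDensity, if_neg (by omega), if_pos hm.symm]
  have above : ∀ k ∈ Ico (kap N α) N, avarDensity N α (k + 1) = 1 / α := fun k hk => by
    simp only [mem_Ico] at hk
    rw [avarDensity, if_neg (by omega), if_neg (by omega)]
  rw [Fin.sum_univ_eq_sum_range (fun k => avarDensity N α (k + 1)),
    ← sum_range_add_sum_Ico _ hκN, sum_congr rfl above, sum_const, Nat.card_Ico, nsmul_eq_mul,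
    Nat.cast_sub hκN, hm, sum_range_succ, below, at_kap, ← hm]
  field_simp
  ring

lemma avarDensity_comp_mem_Aalpha (hN : 1 ≤ N) (hα0 : 0 < α) (hα1 : α < 1)
    (σ : Equiv.Perm (Fin N)) :
    (fun j => avarDensity N α ((σ.symm j).1 + 1)) ∈ Aalpha N α := by
  refine ⟨fun j => avarDensity_mem_Icc hα0 hα1.le _, ?_⟩
  rw [Equiv.sum_comp σ.symm (fun i => avarDensity N α (i.1 + 1)), sum_avarDensity hN hα0 hα1]
  have : (N : ℝ) ≠ 0 := by positivity
  field_simp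

/-- Complementary slackness at the `κ`-th order statistic `f i₀` of a sorted sample `f`. -/
lemma max_sub_eq_mul_avarDensity (hα : α ≠ 0) {f : Fin N → ℝ} (hf : Monotone f) {i₀ : Fin N}
    (hi₀ : (i₀ : ℕ) + 1 = kap N α) (i : Fin N) :
    max (f i - f i₀) 0 = α * avarDensity N α (i + 1) * (f i - f i₀) := by
  rcases lt_trichotomy i i₀ with hi | rfl | hi
  · have : f i ≤ f i₀ := hf hi.le
    rw [avarDensity, if_pos (by rw [Fin.lt_def] at hi; omega), max_eq_right (by linarith)]
    ring
  · simp
  · have : f i₀ ≤ f i := hf hi.le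
    rw [Fin.lt_def] at hi
    rw [avarDensity, if_neg (by omega), if_neg (by omega), max_eq_left (by linarith),
      mul_one_div_cancel hα, one_mul]

end AvarDensity

section Duality

variable {N : ℕ} {α : ℝ} {η : Fin N → ℝ}

lemma Eexp_affine (lam : ℝ) (η Z : Fin N → ℝ) :
    Eexp N (fun i => (1 - lam) * 1 + lam * η i) Z
      = (1 - lam) * ((1 / N : ℝ) * ∑ i, Z i) + lam * Eexp N η Z := by
  simp only [Eexp, add_mul, sum_add_distrib, mul_assoc, ← mul_sum, one_mul]
  ring

lemma natCast_ne_zero_of_mem_Aalpha (hη : η ∈ Aalpha N α) : (N : ℝ) ≠ 0 := by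
  rintro h
  simpa [h] using hη.2

lemma sum_eq_of_mem_Aalpha (hη : η ∈ Aalpha N α) : ∑ i, η i = N := by
  have h := hη.2
  field_simp [natCast_ne_zero_of_mem_Aalpha hη] at h
  linarith

lemma Eexp_eq_of_mem_Aalpha (hα : α ≠ 0) (hη : η ∈ Aalpha N α) (Z : Fin N → ℝ) (u : ℝ) :
    u + 1 / (α * N) * ∑ i, α * η i * (Z i - u) = Eexp N η Z := by
  have hN := natCast_ne_zero_of_mem_Aalpha hη
  have : ∑ i, α * η i * (Z i - u) = α * ∑ i, η i * Z i - α * u * ∑ i, η i := by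
    simp only [mul_sum, ← sum_sub_distrib]
    exact sum_congr rfl fun i _ => by ring
  rw [this, sum_eq_of_mem_Aalpha hη, Eexp]
  field_simp
  ring

lemma Eexp_le_of_mem_Aalpha (hα : 0 < α) (hη : η ∈ Aalpha N α) (Z : Fin N → ℝ) (u : ℝ) :
    Eexp N η Z ≤ u + 1 / (α * N) * ∑ i, max (Z i - u) 0 := by
  rw [← Eexp_eq_of_mem_Aalpha hα.ne' hη Z u]
  gcongr with i
  have h0 : 0 ≤ α * η i := mul_nonneg hα.le (hη.1 i).1
  have h1 : α * η i ≤ 1 := by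
    simpa [hα.ne'] using mul_le_mul_of_nonneg_left (hη.1 i).2 hα.le
  rcases le_total 0 (Z i - u) with h | h
  · exact (mul_le_of_le_one_left h h1).trans (le_max_left _ _)
  · exact (mul_nonpos_of_nonneg_of_nonpos h0 h).trans (le_max_right _ _)

lemma avar_eq_Eexp_of_slackness (hα : 0 < α) (hη : η ∈ Aalpha N α) (Z : Fin N → ℝ) (u₀ : ℝ)
    (hslack : ∀ i, max (Z i - u₀) 0 = α * η i * (Z i - u₀)) :
    avar N α Z = Eexp N η Z := by
  have hattain : u₀ + 1 / (α * N) * ∑ i, max (Z i - u₀) 0 = Eexp N η Z := by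
    simp only [hslack]
    exact Eexp_eq_of_mem_Aalpha hα.ne' hη Z u₀
  refine le_antisymm ?_ (le_ciInf (Eexp_le_of_mem_Aalpha hα hη Z))
  rw [avar, ← hattain]
  exact ciInf_le ⟨_, Set.forall_mem_range.mpr (Eexp_le_of_mem_Aalpha hα hη Z)⟩ u₀

end Duality

theorem worst_case_density_general (N : ℕ) (hN : 1 ≤ N) (α lam : ℝ)
    (hα0 : 0 < α) (hα1 : α < 1)
    (Z : Fin N → ℝ) (σ : Equiv.Perm (Fin N)) (hσ : Monotone fun i => Z (σ i)) :
    (fun j => (N : ℝ) * qw N α lam ((σ.symm j).1 + 1)) ∈ Aset N α lam ∧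
    Eexp N (fun j => (N : ℝ) * qw N α lam ((σ.symm j).1 + 1)) Z = rho N α lam Z := by
  set η := fun j => avarDensity N α ((σ.symm j).1 + 1)
  have hη : η ∈ Aalpha N α := avarDensity_comp_mem_Aalpha hN hα0 hα1 σ
  have hζ : (fun j => (N : ℝ) * qw N α lam ((σ.symm j).1 + 1))
      = fun j => (1 - lam) * 1 + lam * η j :=
    funext fun j => by rw [mul_qw_eq (by positivity) hα0.ne', mul_one]
  obtain ⟨i₀, hi₀⟩ := exists_fin_succ_eq_kap hN hα0.le hα1
  have hslack (j : Fin N) : max (Z j - Z (σ i₀)) 0 = α * η j * (Z j - Z (σ i₀)) := by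
    simpa using max_sub_eq_mul_avarDensity hα0.ne' hσ hi₀ (σ.symm j)
  refine ⟨⟨η, hη, hζ⟩, ?_⟩
  rw [hζ, Eexp_affine, rho, avar_eq_Eexp_of_slackness hα0 hη Z _ hslack]

/-- the worst-case density for `ρ_{λ,α}` at `Z` assigns weight `𝔮ᵢ`
(density `N·𝔮ᵢ`) to the outcome with the `i`-th smallest value of `Z`: the function
`ζ̄` with `ζ̄_{σ(i)} = N·𝔮ᵢ` belongs to `𝔄` and satisfies `E_ζ̄[Z] = ρ_{λ,α}(Z)`. -/
theorem worst_case_density (N : ℕ) (hN : 1 ≤ N) (α lam : ℝ)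
    (hα0 : 0 < α) (hα1 : α < 1) (hlam0 : 0 ≤ lam) (hlam1 : lam ≤ 1)
    (Z : Fin N → ℝ) (σ : Equiv.Perm (Fin N)) (hσ : Monotone fun i => Z (σ i)) :
    (fun j => (N : ℝ) * qw N α lam ((σ.symm j).1 + 1)) ∈ Aset N α lam ∧
    Eexp N (fun j => (N : ℝ) * qw N α lam ((σ.symm j).1 + 1)) Z = rho N α lam Z :=
  worst_case_density_general N hN α lam hα0 hα1 Z σ hσ
end
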